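/- arXiv:2509.11316 — 5 statements merged into one kernel-verified Lean document; each statement's English description precedes it below -/
import Mathlib

section
/- For any matrices U, X ∈ ℝ^{p×r}, one has dist²(U, X) ≤ ‖UU^⊤ − XX^⊤‖_F² / (2(√2 − 1) σ_r(X)²), where dist(U, X) = min over orthogonal matrices O ∈ O(r) of ‖UO − X‖_F and σ_r(X) is the smallest singular value of X. -/
/-!
Pick `Q ∈ O(r)` maximising `R ↦ tr (Xᵀ U R)` (the orthogonal group is compact). Testing this
maximality against plane rotations and Householder reflections shows that `W = Xᵀ U Q` is symmetric
positive semidefinite. With `D = U Q - X`, `K = Dᵀ D` and the symmetric `S = Xᵀ D = W - Xᵀ X`,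
`‖U Uᵀ - X Xᵀ‖² = ‖K‖² + 4 tr (K S) + 2 ‖S‖² + 2 tr (K Xᵀ X)`.
Now `tr (K S) ≥ -‖K‖ ‖S‖` by Cauchy–Schwarz and `tr (K S) ≥ -tr (K Xᵀ X)` because `tr (K W) ≥ 0`;
splitting `4 tr (K S)` between these bounds with weights `2√2` and `4 - 2√2` leaves at least
`2 (√2 - 1) tr (K Xᵀ X) = 2 (√2 - 1) ‖X Dᵀ‖² ≥ 2 (√2 - 1) σ² ‖D‖²`, and `‖D‖ ≥ dist (U, X)`.
-/

open Matrix

/-- Squared Frobenius norm. -/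
noncomputable def frobSq {m n : ℕ} (M : Matrix (Fin m) (Fin n) ℝ) : ℝ :=
  ∑ i, ∑ j, (M i j) ^ 2

/-- Frobenius norm. -/
noncomputable def frobNorm {m n : ℕ} (M : Matrix (Fin m) (Fin n) ℝ) : ℝ :=
  Real.sqrt (frobSq M)

/-- `dist(U, X) = inf over orthogonal O of ‖U O − X‖_F`. -/
noncomputable def orthoDist {p r : ℕ} (U X : Matrix (Fin p) (Fin r) ℝ) : ℝ :=
  ⨅ O : Matrix.orthogonalGroup (Fin r) ℝ, frobNorm (U * (O : Matrix (Fin r) (Fin r) ℝ) - X)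

-- The maximum of `c * a + s * b` on the unit circle is `√(a ^ 2 + b ^ 2)`.
theorem eq_zero_of_forall_mul_add_mul_le {a b : ℝ}
    (h : ∀ c s : ℝ, c ^ 2 + s ^ 2 = 1 → c * a + s * b ≤ a) : b = 0 := by
  by_contra hb
  have hr : 0 < √(a ^ 2 + b ^ 2) := Real.sqrt_pos.2 (by positivity)
  have hr2 : √(a ^ 2 + b ^ 2) ^ 2 = a ^ 2 + b ^ 2 := Real.sq_sqrt (by positivity)
  have := h (a / √(a ^ 2 + b ^ 2)) (b / √(a ^ 2 + b ^ 2)) (by field_simp; linarith)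
  rw [div_mul_eq_mul_div, div_mul_eq_mul_div, ← add_div, div_le_iff₀ hr] at this
  nlinarith [sq_pos_of_ne_zero hb]

namespace Matrix

variable {n : Type*} [Fintype n] [DecidableEq n]

theorem isCompact_unitaryGroup {𝕜 : Type*} [RCLike 𝕜] :
    IsCompact (unitaryGroup n 𝕜 : Set (Matrix n n 𝕜)) := by
  -- outside the scoped norm, so that `ContinuousMul` is found for the product topology
  have hclosed : IsClosed (unitaryGroup n 𝕜 : Set (Matrix n n 𝕜)) := isClosed_unitary
  open scoped Matrix.Norms.Elementwise in
  exact Metric.isCompact_of_isClosed_isBounded hclosed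
    (isBounded_iff_forall_norm_le.2 ⟨1, fun _ hU => entrywise_sup_norm_bound_of_unitary hU⟩)

-- For `v = 0` the coefficient is `2 / 0 = 0`, so `householder 0 = 1`.
noncomputable def householder (v : n → ℝ) : Matrix n n ℝ :=
  1 - (2 / (v ⬝ᵥ v)) • vecMulVec v v

theorem householder_mem_orthogonalGroup (v : n → ℝ) :
    householder v ∈ orthogonalGroup n ℝ := by
  have hsq : vecMulVec v v * vecMulVec v v = (v ⬝ᵥ v) • vecMulVec v v := by
    rw [vecMulVec_mul_vecMulVec, vecMulVec_smul]
  have hcoef : (2 / (v ⬝ᵥ v)) ^ 2 * (v ⬝ᵥ v) = 2 * (2 / (v ⬝ᵥ v)) := by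
    rcases eq_or_ne (v ⬝ᵥ v) 0 with h | h
    · simp [h]
    · field_simp
  rw [mem_orthogonalGroup_iff', householder, transpose_sub, transpose_one, transpose_smul,
    transpose_vecMulVec]
  simp only [sub_mul, mul_sub, one_mul, mul_one, smul_mul_smul_comm, hsq, smul_smul]
  rw [← sq, hcoef]
  module

theorem trace_mul_householder (W : Matrix n n ℝ) (v : n → ℝ) :
    trace (W * householder v) = trace W - 2 / (v ⬝ᵥ v) * (v ⬝ᵥ W *ᵥ v) := by
  rw [householder, mul_sub, mul_one, Matrix.mul_smul, trace_sub, trace_smul, mul_vecMulVec,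
    trace_vecMulVec, dotProduct_comm (W *ᵥ v), smul_eq_mul]

noncomputable def planeRotation (i j : n) (c s : ℝ) : Matrix n n ℝ :=
  1 + (c - 1) • (single i i 1 + single j j 1) + s • (single i j 1 - single j i 1)

theorem planeRotation_mem_orthogonalGroup {i j : n} (hij : i ≠ j) {c s : ℝ}
    (hcs : c ^ 2 + s ^ 2 = 1) : planeRotation i j c s ∈ orthogonalGroup n ℝ := by
  rw [mem_orthogonalGroup_iff', planeRotation]
  set P : Matrix n n ℝ := single i i 1 + single j j 1
  set J : Matrix n n ℝ := single i j 1 - single j i 1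
  have hij' : ∀ a l : n, single a i (1 : ℝ) * single j l 1 = 0 :=
    fun a l => single_mul_single_of_ne (c := 1) a i j hij 1
  have hji' : ∀ a l : n, single a j (1 : ℝ) * single i l 1 = 0 :=
    fun a l => single_mul_single_of_ne (c := 1) a j i hij.symm 1
  have hPP : P * P = P := by simp [P, add_mul, mul_add, hij', hji']
  have hPJ : P * J = J := by simp [P, J, add_mul, mul_sub, hij', hji']
  have hJP : J * P = J := by simp [P, J, sub_mul, mul_add, hij', hji']; abel
  have hJJ : J * J = -P := by simp [P, J, sub_mul, mul_sub, hij', hji']; abel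
  have hPt : Pᵀ = P := by simp [P]
  have hJt : Jᵀ = -J := by simp [J]
  simp only [transpose_add, transpose_smul, transpose_one, hPt, hJt, add_mul, mul_add,
    one_mul, mul_one, smul_neg, neg_mul, hPP, hPJ, hJP, hJJ, smul_mul_assoc, mul_smul_comm]
  linear_combination (norm := module) hcs • P

theorem trace_mul_planeRotation (W : Matrix n n ℝ) (i j : n) (c s : ℝ) :
    trace (W * planeRotation i j c s) =
      trace W + (c - 1) * (W i i + W j j) + s * (W j i - W i j) := by
  simp [planeRotation, mul_add, mul_sub, trace_add, trace_sub, trace_smul, trace_mul_single]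
  ring

theorem isHermitian_of_isMaxOn_trace_mul {W : Matrix n n ℝ}
    (hW : IsMaxOn (fun R => trace (W * R)) (orthogonalGroup n ℝ) 1) : W.IsHermitian := by
  refine IsHermitian.ext fun i j => ?_
  rcases eq_or_ne i j with rfl | hij
  · rfl
  have hb : W i j - W j i = 0 :=
    eq_zero_of_forall_mul_add_mul_le (a := W j j + W i i) fun c s hcs => by
    have : trace (W * planeRotation j i c s) ≤ trace (W * 1) :=
      hW (planeRotation_mem_orthogonalGroup hij.symm hcs)
    rw [trace_mul_planeRotation, mul_one] at this
    linarith
  rw [star_trivial]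
  linarith

theorem posSemidef_of_isMaxOn_trace_mul {W : Matrix n n ℝ}
    (hW : IsMaxOn (fun R => trace (W * R)) (orthogonalGroup n ℝ) 1) : W.PosSemidef := by
  refine .of_dotProduct_mulVec_nonneg (isHermitian_of_isMaxOn_trace_mul hW) fun x => ?_
  rcases eq_or_ne x 0 with rfl | hx
  · simp
  have h : trace (W * householder x) ≤ trace (W * 1) := hW (householder_mem_orthogonalGroup x)
  rw [trace_mul_householder, mul_one] at h
  have hpos : 0 < 2 / (x ⬝ᵥ x) :=
    div_pos two_pos (by simpa using dotProduct_star_self_pos_iff.2 hx)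
  rw [star_trivial]
  exact (mul_nonneg_iff_of_pos_left hpos).1 (by linarith)

theorem exists_mem_orthogonalGroup_posSemidef_mul (B : Matrix n n ℝ) :
    ∃ Q ∈ orthogonalGroup n ℝ, (B * Q).PosSemidef := by
  obtain ⟨Q, hQ, hmax⟩ := isCompact_unitaryGroup.exists_isMaxOn ⟨1, one_mem _⟩
    (f := fun R => trace (B * R)) (by fun_prop)
  refine ⟨Q, hQ, posSemidef_of_isMaxOn_trace_mul fun R hR => ?_⟩
  simpa [Matrix.mul_assoc] using hmax (mul_mem hQ hR)

end Matrix

theorem two_mul_sqrt_two_sub_one_mul_le {x y g c : ℝ} (hcg : -g ≤ c) (hcxy : -(x * y) ≤ c) :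
    2 * (√2 - 1) * g ≤ x ^ 2 + 4 * c + 2 * y ^ 2 + 2 * g := by
  -- The difference is `(x - √2 y)² + 2√2 (c + x y) + (4 - 2√2) (c + g)`.
  have h2 : √2 ^ 2 = 2 := Real.sq_sqrt zero_le_two
  have h2le : √2 ≤ 2 := by nlinarith [Real.sqrt_nonneg 2]
  nlinarith [sq_nonneg (x - √2 * y),
    mul_nonneg (Real.sqrt_nonneg 2) (neg_le_iff_add_nonneg.1 hcxy),
    mul_nonneg (sub_nonneg.2 h2le) (neg_le_iff_add_nonneg.1 hcg)]

section Frobenius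

variable {m n : ℕ}

theorem frobSq_nonneg (M : Matrix (Fin m) (Fin n) ℝ) : 0 ≤ frobSq M :=
  Finset.sum_nonneg fun _ _ => Finset.sum_nonneg fun _ _ => sq_nonneg _

theorem sq_frobNorm (M : Matrix (Fin m) (Fin n) ℝ) : frobNorm M ^ 2 = frobSq M :=
  Real.sq_sqrt (frobSq_nonneg M)

theorem frobSq_eq_trace (M : Matrix (Fin m) (Fin n) ℝ) : frobSq M = trace (Mᵀ * M) := by
  rw [frobSq, Finset.sum_comm]
  simp [trace, mul_apply, sq]

theorem frobSq_eq_trace_mul_self {M : Matrix (Fin n) (Fin n) ℝ} (hM : Mᵀ = M) :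
    frobSq M = trace (M * M) := by
  rw [frobSq_eq_trace, hM]

theorem abs_trace_mul_le (A : Matrix (Fin m) (Fin n) ℝ) (B : Matrix (Fin n) (Fin m) ℝ) :
    |trace (A * B)| ≤ frobNorm A * frobNorm B := by
  rw [frobNorm, frobNorm, ← Real.sqrt_mul (frobSq_nonneg A)]
  apply Real.abs_le_sqrt
  have hB : frobSq B = ∑ i, ∑ k, (B k i) ^ 2 := Finset.sum_comm
  rw [hB]
  simp only [trace, diag_apply, mul_apply, frobSq, ← Fintype.sum_prod_type']
  exact Finset.sum_mul_sq_le_sq_mul_sq _ _ _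

end Frobenius

theorem sq_orthoDist_le_frobSq {p r : ℕ} (U X : Matrix (Fin p) (Fin r) ℝ)
    {Q : Matrix (Fin r) (Fin r) ℝ} (hQ : Q ∈ orthogonalGroup (Fin r) ℝ) :
    orthoDist U X ^ 2 ≤ frobSq (U * Q - X) := by
  have hle : orthoDist U X ≤ frobNorm (U * Q - X) :=
    ciInf_le ⟨0, Set.forall_mem_range.2 fun _ => Real.sqrt_nonneg _⟩
      (⟨Q, hQ⟩ : orthogonalGroup _ _)
  rw [← sq_frobNorm]
  exact pow_le_pow_left₀ (Real.iInf_nonneg fun _ => Real.sqrt_nonneg _) hle 2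

theorem sq_mul_frobSq_le_trace {q p r : ℕ} {X : Matrix (Fin p) (Fin r) ℝ} {σ : ℝ}
    (hσ : ∀ w : Fin r → ℝ, σ ^ 2 * (∑ i, (w i) ^ 2) ≤ ∑ j, ((X *ᵥ w) j) ^ 2)
    (D : Matrix (Fin q) (Fin r) ℝ) : σ ^ 2 * frobSq D ≤ trace (Dᵀ * D * (Xᵀ * X)) := by
  have htr : trace (Dᵀ * D * (Xᵀ * X)) = frobSq (D * Xᵀ) := by
    rw [frobSq_eq_trace, transpose_mul, transpose_transpose, Matrix.mul_assoc X,
      trace_mul_comm X]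
    simp only [Matrix.mul_assoc]
  rw [htr, frobSq, frobSq, Finset.mul_sum]
  refine Finset.sum_le_sum fun i _ => (hσ (D i)).trans_eq ?_
  simp [mul_apply, mulVec, dotProduct, mul_comm]

theorem frobSq_mul_transpose_sub_mul_transpose {p r : ℕ} (U X : Matrix (Fin p) (Fin r) ℝ) :
    frobSq (U * Uᵀ - X * Xᵀ) =
      trace ((U - X)ᵀ * (U - X) * ((U - X)ᵀ * (U - X)))
        + 4 * trace ((U - X)ᵀ * (U - X) * (Xᵀ * (U - X)))
        + 2 * trace (Xᵀ * (U - X) * (Xᵀ * (U - X)))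
        + 2 * trace ((U - X)ᵀ * (U - X) * (Xᵀ * X)) := by
  obtain ⟨D, rfl⟩ : ∃ D, U = D + X := ⟨U - X, by abel⟩
  have hM : (D + X) * (D + X)ᵀ - X * Xᵀ = D * Dᵀ + D * Xᵀ + X * Dᵀ := by
    simp only [transpose_add, Matrix.add_mul, Matrix.mul_add]; abel
  have cycle : ∀ (A C : Matrix (Fin p) (Fin r) ℝ) (B E : Matrix (Fin r) (Fin p) ℝ),
      trace (A * B * (C * E)) = trace (B * C * (E * A)) := by
    intro A B C E
    rw [Matrix.mul_assoc, trace_mul_comm A]; simp only [Matrix.mul_assoc]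
  rw [add_sub_cancel_right, hM, frobSq_eq_trace]
  simp only [transpose_add, transpose_mul, transpose_transpose, Matrix.add_mul, Matrix.mul_add,
    trace_add, cycle]
  set K := Dᵀ * D
  set S := Xᵀ * D
  have hKS : trace (K * Sᵀ) = trace (K * S) := by
    rw [← trace_transpose, transpose_mul, transpose_transpose, trace_mul_comm]
    simp [K]
  rw [show Dᵀ * X = Sᵀ by simp [S], trace_mul_comm Sᵀ K, trace_mul_comm S K,
    trace_mul_comm (Xᵀ * X) K, hKS, trace_transpose_mul]
  ring

theorem two_mul_sqrt_two_sub_one_mul_trace_le_frobSq {p r : ℕ} {U X : Matrix (Fin p) (Fin r) ℝ}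
    (hW : (Xᵀ * U).PosSemidef) :
    2 * (√2 - 1) * trace ((U - X)ᵀ * (U - X) * (Xᵀ * X)) ≤ frobSq (U * Uᵀ - X * Xᵀ) := by
  rw [frobSq_mul_transpose_sub_mul_transpose]
  set D := U - X
  set K := Dᵀ * D
  have hWt : (Xᵀ * U)ᵀ = Xᵀ * U := by
    simpa only [conjTranspose_eq_transpose_of_trivial] using hW.isHermitian.eq
  have hSD : Xᵀ * U = Xᵀ * D + Xᵀ * X := by simp [D, Matrix.mul_sub]
  have hS : (Xᵀ * D)ᵀ = Xᵀ * D := by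
    rw [eq_sub_of_add_eq hSD.symm, transpose_sub, hWt]
    simp
  have hKW : 0 ≤ trace (K * (Xᵀ * U)) := by
    rw [Matrix.mul_assoc, trace_mul_comm, ← conjTranspose_eq_transpose_of_trivial]
    exact (hW.mul_mul_conjTranspose_same D).trace_nonneg
  have hcg : -trace (K * (Xᵀ * X)) ≤ trace (K * (Xᵀ * D)) := by
    rw [hSD, Matrix.mul_add, trace_add] at hKW
    linarith
  have hcs := neg_le_of_abs_le (abs_trace_mul_le K (Xᵀ * D))
  rw [← frobSq_eq_trace_mul_self (by rw [transpose_mul, transpose_transpose]),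
    ← frobSq_eq_trace_mul_self hS, ← sq_frobNorm, ← sq_frobNorm]
  exact two_mul_sqrt_two_sub_one_mul_le hcg hcs

/-- `σ` stands for `σ_r(X)`: `hσ` is the Rayleigh-quotient bound `σ² ‖w‖² ≤ ‖X w‖²`. -/
theorem orthoDist_sq_le {p r : ℕ} (U X : Matrix (Fin p) (Fin r) ℝ) (σ : ℝ)
    (hσpos : 0 < σ)
    (hσ : ∀ w : Fin r → ℝ, σ ^ 2 * (∑ i, (w i) ^ 2) ≤ ∑ j, ((X *ᵥ w) j) ^ 2) :
    (orthoDist U X) ^ 2 ≤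
      frobSq (U * U.transpose - X * X.transpose) / (2 * (Real.sqrt 2 - 1) * σ ^ 2) := by
  obtain ⟨Q, hQ, hW⟩ := exists_mem_orthogonalGroup_posSemidef_mul (Xᵀ * U)
  have hUQ : U * Q * (U * Q)ᵀ = U * Uᵀ := by
    rw [transpose_mul, Matrix.mul_assoc, ← Matrix.mul_assoc Q,
      (mem_orthogonalGroup_iff _ _).1 hQ, Matrix.one_mul]
  have hc : 0 < 2 * (√2 - 1) := by
    have : 1 < √2 := by rw [Real.lt_sqrt zero_le_one]; norm_num
    linarith
  rw [le_div_iff₀ (by positivity)]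
  calc orthoDist U X ^ 2 * (2 * (√2 - 1) * σ ^ 2)
      ≤ frobSq (U * Q - X) * (2 * (√2 - 1) * σ ^ 2) := by
        gcongr
        exact sq_orthoDist_le_frobSq U X hQ
    _ = 2 * (√2 - 1) * (σ ^ 2 * frobSq (U * Q - X)) := by ring
    _ ≤ 2 * (√2 - 1) * trace ((U * Q - X)ᵀ * (U * Q - X) * (Xᵀ * X)) := by
        gcongr
        exact sq_mul_frobSq_le_trace hσ _
    _ ≤ frobSq (U * Q * (U * Q)ᵀ - X * Xᵀ) :=
        two_mul_sqrt_two_sub_one_mul_trace_le_frobSq (by rwa [← Matrix.mul_assoc])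
    _ = frobSq (U * U.transpose - X * X.transpose) := by rw [hUQ]
end

section
/- Let U ∈ ℝ^{m×r} have orthonormal columns and let P_U = UU^⊤ be the orthogonal projection. Define the incoherence constant I(U) = max_i ‖e_i^⊤ U‖₂². Then for any matrix A ∈ ℝ^{m×m}, ‖D(P_U A)‖_sp ≤ √(I(U)) · ‖A‖_sp, where D(·) denotes the operation of zeroing all off-diagonal entries. -/
open Matrix

/-- Spectral (ℓ₂ operator) norm of a real matrix. -/
noncomputable def spNorm {m n : ℕ} (M : Matrix (Fin m) (Fin n) ℝ) : ℝ :=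
  ‖(Matrix.toEuclideanLin M).toContinuousLinearMap‖

/-- The diagonal part `D(M)` of a square matrix. -/
def diagPart {m : ℕ} (M : Matrix (Fin m) (Fin m) ℝ) : Matrix (Fin m) (Fin m) ℝ :=
  Matrix.diagonal (fun i => M i i)

/-!
Write `(U Uᵀ A)ᵢᵢ = ⟨Uᵢ, (Uᵀ A) eᵢ⟩`. By Cauchy–Schwarz its modulus is at most `‖Uᵢ‖ · ‖Uᵀ A eᵢ‖`.
The first factor is at most `√I(U)`. For the second, `‖Uᵀ‖ = ‖U‖ ≤ 1` by the C⋆-identity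
`‖U‖² = ‖Uᵀ U‖ = ‖1‖`, so `‖Uᵀ A eᵢ‖ ≤ ‖A‖`. The spectral norm of a diagonal matrix is the
largest modulus of its entries.
-/

open scoped Matrix.Norms.L2Operator InnerProductSpace

namespace Matrix

variable {𝕜 l m n : Type*} [RCLike 𝕜] [Fintype m]

lemma norm_mul_apply_le (B : Matrix l m 𝕜) (C : Matrix m n 𝕜) (i : l) (k : n) :
    ‖(B * C) i k‖ ≤ ‖WithLp.toLp 2 (B i)‖ * ‖WithLp.toLp 2 (C.col k)‖ :=
  calc ‖(B * C) i k‖ = ‖⟪WithLp.toLp 2 (star (B i)), WithLp.toLp 2 (C.col k)⟫_𝕜‖ := by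
        rw [EuclideanSpace.inner_toLp_toLp, star_star, dotProduct_comm]
        rfl
    _ ≤ ‖WithLp.toLp 2 (star (B i))‖ * ‖WithLp.toLp 2 (C.col k)‖ := norm_inner_le_norm _ _
    _ = ‖WithLp.toLp 2 (B i)‖ * ‖WithLp.toLp 2 (C.col k)‖ := by
        simp only [EuclideanSpace.norm_eq, Pi.star_apply, norm_star]

variable [Fintype n] [DecidableEq n]

lemma norm_col_le_l2_opNorm (B : Matrix m n 𝕜) (k : n) :
    ‖WithLp.toLp 2 (B.col k)‖ ≤ ‖B‖ := by
  have h := B.l2_opNorm_mulVec (EuclideanSpace.single k 1)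
  rwa [PiLp.ofLp_single, mulVec_single_one, PiLp.norm_single, norm_one, mul_one] at h

lemma l2_opNorm_le_one_of_conjTranspose_mul_self_eq_one {U : Matrix m n 𝕜} (hU : Uᴴ * U = 1) :
    ‖U‖ ≤ 1 := by
  have h : ‖U‖ * ‖U‖ ≤ 1 := by
    rw [← l2_opNorm_conjTranspose_mul_self, hU, ← diagonal_one, l2_opNorm_diagonal]
    exact (pi_norm_const_le _).trans norm_one.le
  nlinarith [norm_nonneg U]

end Matrix

lemma spNorm_eq_l2_opNorm {m n : ℕ} (M : Matrix (Fin m) (Fin n) ℝ) : spNorm M = ‖M‖ := rfl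

theorem spNorm_diagPart_proj_le_general {m r : ℕ}
    (U : Matrix (Fin m) (Fin r) ℝ) (A : Matrix (Fin m) (Fin m) ℝ) (IU : ℝ)
    (hU : U.transpose * U = 1)
    (hIU : ∀ i, (∑ j, (U i j) ^ 2) ≤ IU) :
    spNorm (diagPart ((U * U.transpose) * A)) ≤ Real.sqrt IU * spNorm A := by
  have hUt : ‖Uᵀ‖ ≤ 1 := by
    rw [← conjTranspose_eq_transpose_of_trivial, l2_opNorm_conjTranspose]
    exact l2_opNorm_le_one_of_conjTranspose_mul_self_eq_one hU
  have hrow (i : Fin m) : ‖WithLp.toLp 2 (U i)‖ ≤ Real.sqrt IU := by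
    simpa [EuclideanSpace.norm_eq] using Real.sqrt_le_sqrt (hIU i)
  have hcol (i : Fin m) : ‖WithLp.toLp 2 ((Uᵀ * A).col i)‖ ≤ ‖A‖ :=
    calc _ ≤ ‖Uᵀ * A‖ := norm_col_le_l2_opNorm _ i
      _ ≤ ‖Uᵀ‖ * ‖A‖ := l2_opNorm_mul _ _
      _ ≤ ‖A‖ := mul_le_of_le_one_left (norm_nonneg A) hUt
  rw [spNorm_eq_l2_opNorm, spNorm_eq_l2_opNorm, diagPart, l2_opNorm_diagonal,
    pi_norm_le_iff_of_nonneg (by positivity)]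
  intro i
  calc ‖(U * Uᵀ * A) i i‖ = ‖(U * (Uᵀ * A)) i i‖ := by rw [Matrix.mul_assoc]
    _ ≤ ‖WithLp.toLp 2 (U i)‖ * ‖WithLp.toLp 2 ((Uᵀ * A).col i)‖ := norm_mul_apply_le _ _ i i
    _ ≤ Real.sqrt IU * ‖A‖ := mul_le_mul (hrow i) (hcol i) (norm_nonneg _) (Real.sqrt_nonneg _)

/-- If `U` has orthonormal columns and incoherence constant
`I(U) = max_i ‖e_iᵀ U‖₂² ≤ IU`, then `‖D(P_U A)‖_sp ≤ √IU ⬝ ‖A‖_sp`, where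
`P_U = U Uᵀ`. -/
theorem spNorm_diagPart_proj_le {m r : ℕ}
    (U : Matrix (Fin m) (Fin r) ℝ) (A : Matrix (Fin m) (Fin m) ℝ) (IU : ℝ)
    (hU : U.transpose * U = 1)
    (hIU0 : 0 ≤ IU)
    (hIU : ∀ i, (∑ j, (U i j) ^ 2) ≤ IU) :
    spNorm (diagPart ((U * U.transpose) * A)) ≤ Real.sqrt IU * spNorm A :=
  spNorm_diagPart_proj_le_general U A IU hU hIU
end

section
/- Let Θ ∈ {0,1}^{v×G} be a membership matrix (each row has exactly one entry equal to 1), let B ∈ ℝ^{G×G} be symmetric of full rank, and set S = ΘBΘ^⊤. Let D_B = diag(BΘ^⊤1_v) and suppose all entries of D_B and of the degree matrix D = diag(S1_v) are strictly positive. Then the normalized Laplacian L = D^{-1/2} S D^{-1/2} factors as L = Θ B_L Θ^⊤ with B_L = D_B^{-1/2} B D_B^{-1/2} symmetric and of full rank G. -/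
/-!
A membership matrix is `Θ = 1.submatrix c id`, so `Θ M Θᵀ = M.submatrix c c` for every `M`.
Hence the degree of node `i` in `S = Θ B Θᵀ` is the community degree `dB (c i)`, so
`D^{-1/2} = diag (dB ∘ c)^{-1/2}`, and conjugating `B.submatrix c c` by a diagonal that only
depends on the community is the same as conjugating `B` by `D_B^{-1/2}` and then taking the
submatrix.
-/

open Matrix

/-- The diagonal matrix `D^{-1/2}` built from the row sums (degrees) of `S`. -/
noncomputable def invSqrtDeg {v : ℕ} (S : Matrix (Fin v) (Fin v) ℝ) :
    Matrix (Fin v) (Fin v) ℝ :=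
  Matrix.diagonal (fun i => (Real.sqrt (∑ j, S i j))⁻¹)

namespace Matrix

variable {ι κ R : Type*} [DecidableEq κ]

theorem eq_one_submatrix_of_apply_eq_ite [Zero R] [One R] {Θ : Matrix ι κ R}
    {c : ι → κ} (hΘ : ∀ i g, Θ i g = if g = c i then 1 else 0) :
    Θ = (1 : Matrix κ κ R).submatrix c id := by
  ext i g
  simp [hΘ, one_apply, eq_comm]

variable [Fintype κ] [Semiring R] (c : ι → κ)

theorem one_submatrix_mulVec (x : κ → R) :
    (1 : Matrix κ κ R).submatrix c id *ᵥ x = x ∘ c := by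
  simpa using submatrix_mulVec_equiv (1 : Matrix κ κ R) x c (Equiv.refl κ)

theorem one_submatrix_mul_mul_transpose (M : Matrix κ κ R) :
    (1 : Matrix κ κ R).submatrix c id * M * ((1 : Matrix κ κ R).submatrix c id)ᵀ =
      M.submatrix c c := by
  ext i j
  simp [mul_apply, one_apply]

theorem one_submatrix_mul_mul_transpose_mulVec [Fintype ι] (M : Matrix κ κ R) (x : ι → R) :
    ((1 : Matrix κ κ R).submatrix c id * M * ((1 : Matrix κ κ R).submatrix c id)ᵀ) *ᵥ x =
      (M *ᵥ (((1 : Matrix κ κ R).submatrix c id)ᵀ *ᵥ x)) ∘ c := by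
  rw [← mulVec_mulVec, ← mulVec_mulVec, one_submatrix_mulVec]

theorem submatrix_diagonal_mul_mul_diagonal [Fintype ι] [DecidableEq ι] (d : κ → R)
    (M : Matrix κ κ R) :
    (diagonal d * M * diagonal d).submatrix c c =
      diagonal (d ∘ c) * M.submatrix c c * diagonal (d ∘ c) := by
  ext i j
  simp [diagonal_mul, mul_diagonal]

end Matrix

theorem sbm_laplacian_factorization_general {v G : ℕ}
    (Θ : Matrix (Fin v) (Fin G) ℝ) (c : Fin v → Fin G)
    (B : Matrix (Fin G) (Fin G) ℝ)
    (hΘ : ∀ (i : Fin v) (g : Fin G), Θ i g = if g = c i then 1 else 0)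
    (hB : B.transpose = B) (hBrank : B.det ≠ 0)
    (S : Matrix (Fin v) (Fin v) ℝ) (hS : S = Θ * B * Θ.transpose)
    (dB : Fin G → ℝ)
    (hdB : ∀ g, dB g = ∑ g', B g g' * (∑ i : Fin v, Θ i g'))
    (hdBpos : ∀ g, 0 < dB g) :
    ∃ BL : Matrix (Fin G) (Fin G) ℝ,
      BL = Matrix.diagonal (fun g => (Real.sqrt (dB g))⁻¹) * B *
        Matrix.diagonal (fun g => (Real.sqrt (dB g))⁻¹) ∧
      invSqrtDeg S * S * invSqrtDeg S = Θ * BL * Θ.transpose ∧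
      BL.transpose = BL ∧ BL.det ≠ 0 := by
  set d : Fin G → ℝ := fun g => (Real.sqrt (dB g))⁻¹
  refine ⟨diagonal d * B * diagonal d, rfl, ?_, ?_, ?_⟩
  · have hdB_eq : dB = B *ᵥ (Θᵀ *ᵥ 1) := by
      ext g
      simp [hdB, mulVec, dotProduct]
    have hdeg : ∀ i, ∑ j, S i j = dB (c i) := fun i => by
      have := congrFun (one_submatrix_mul_mul_transpose_mulVec c B (1 : Fin v → ℝ)) i
      rw [← eq_one_submatrix_of_apply_eq_ite hΘ, ← hS, ← hdB_eq] at this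
      simpa [mulVec, dotProduct] using this
    have hD : invSqrtDeg S = diagonal (d ∘ c) := by
      simp only [invSqrtDeg, hdeg]
      rfl
    rw [hD, hS, eq_one_submatrix_of_apply_eq_ite hΘ, one_submatrix_mul_mul_transpose,
      one_submatrix_mul_mul_transpose, submatrix_diagonal_mul_mul_diagonal]
  · simp [transpose_mul, hB, Matrix.mul_assoc]
  · have hd : ∀ g, d g ≠ 0 := fun g => inv_ne_zero (Real.sqrt_pos.mpr (hdBpos g)).ne'
    simp [det_mul, det_diagonal, Finset.prod_ne_zero_iff, hd, hBrank]

/-- SBM Laplacian factorization: for a membership matrix `Θ` (encoded by the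
community assignment `c`), a symmetric full-rank `B`, and `S = ΘBΘᵀ` with
strictly positive `D_B = diag(BΘᵀ1)` and degrees, the normalized Laplacian
`L = D^{-1/2}SD^{-1/2}` factors as `L = Θ B_L Θᵀ` with
`B_L = D_B^{-1/2} B D_B^{-1/2}` symmetric of full rank. -/
theorem sbm_laplacian_factorization {v G : ℕ}
    (Θ : Matrix (Fin v) (Fin G) ℝ) (c : Fin v → Fin G)
    (B : Matrix (Fin G) (Fin G) ℝ)
    (hΘ : ∀ (i : Fin v) (g : Fin G), Θ i g = if g = c i then 1 else 0)
    (hB : B.transpose = B) (hBrank : B.det ≠ 0)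
    (S : Matrix (Fin v) (Fin v) ℝ) (hS : S = Θ * B * Θ.transpose)
    (dB : Fin G → ℝ)
    (hdB : ∀ g, dB g = ∑ g', B g g' * (∑ i : Fin v, Θ i g'))
    (hdBpos : ∀ g, 0 < dB g)
    (hdegpos : ∀ i : Fin v, 0 < ∑ j, S i j) :
    ∃ BL : Matrix (Fin G) (Fin G) ℝ,
      BL = Matrix.diagonal (fun g => (Real.sqrt (dB g))⁻¹) * B *
        Matrix.diagonal (fun g => (Real.sqrt (dB g))⁻¹) ∧
      invSqrtDeg S * S * invSqrtDeg S = Θ * BL * Θ.transpose ∧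
      BL.transpose = BL ∧ BL.det ≠ 0 :=
  sbm_laplacian_factorization_general Θ c B hΘ hB hBrank S hS dB hdB hdBpos
end

section
/- Let Ũ, U ∈ ℝ^{d×r} have orthonormal columns, let Q ∈ ℝ^{d×r} with QQ^⊤ = UΛU^⊤ where Λ is diagonal positive definite with smallest entry λ_r² > 0, and let Ñ be a symmetric matrix whose top-r eigenvector matrix is Ũ. Then ‖ŨŨ^⊤ − UU^⊤‖_sp ≤ (4/λ_r²)·‖Ñ − QQ^⊤‖_sp, provided ‖Ñ − QQ^⊤‖_sp < λ_r²/2. -/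
/-!
Write `N = QQᵀ = UΛUᵀ`, `Ñ = V diag(μ) Vᵀ` and `ε = ‖Ñ - N‖`. Comparing quadratic forms on
subspaces of the right dimension (Courant–Fischer) gives Weyl's bounds: `μ i ≥ λ - ε > λ/2` for
`i < r` and `|μ i| ≤ ε` for `i ≥ r`.

With `P = UUᵀ` and `P̃ = ŨŨᵀ = V diag(1_{i<r}) Vᵀ`, split `P̃ - P = P̃(1 - P) - (1 - P̃)P`.
The spectral projection factors as `P̃ = GÑ` with `G = V diag(1_{i<r}/μ) Vᵀ`, `‖G‖ ≤ 2/λ`, and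
`Ñ(1 - P) = (Ñ - N)(1 - P)`; dually `P = NR` with `R = UΛ⁻¹Uᵀ`, `‖R‖ ≤ 1/λ`, and
`(1 - P̃)N = (1 - P̃)Ñ - (1 - P̃)(Ñ - N)` where `‖(1 - P̃)Ñ‖ = max_{i ≥ r} |μ i| ≤ ε`.
Each of the two terms is therefore at most `2ε/λ`.
-/

open Matrix

open Module
open scoped Matrix.Norms.L2Operator

lemma norm_indicator_inv_le {ι : Type*} [Fintype ι] {f : ι → ℝ} {s : Set ι} {a : ℝ}
    (ha : 0 < a) (hs : ∀ i ∈ s, a ≤ f i) : ‖s.indicator f⁻¹‖ ≤ a⁻¹ := by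
  refine (pi_norm_le_iff_of_nonneg (inv_nonneg.2 ha.le)).2 fun i => ?_
  by_cases hi : i ∈ s
  · have hfi := hs i hi
    rw [Set.indicator_of_mem hi, Pi.inv_apply, norm_inv, Real.norm_of_nonneg (ha.le.trans hfi)]
    exact inv_anti₀ ha hfi
  · simp [hi, ha.le]

namespace Matrix

lemma submatrix_id_mul_transpose {m n κ : Type*} [Fintype n] [Fintype κ] [DecidableEq n]
    (A : Matrix m n ℝ) {e : κ → n} (he : Function.Injective e) :
    A.submatrix id e * (A.submatrix id e)ᵀ =
      A * diagonal ((Set.range e).indicator (1 : n → ℝ)) * Aᵀ := by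
  ext a b
  have hind (i : n) : A a i * (Set.range e).indicator 1 i * A b i =
      (Set.range e).indicator (fun i => A a i * A b i) i := by
    by_cases h : i ∈ Set.range e <;> simp [h]
  rw [mul_apply, mul_apply]
  simp only [mul_diagonal, submatrix_apply, transpose_apply, id, hind]
  rw [Finset.sum_indicator_eq_sum_filter,
    ← Finset.sum_image (f := fun i => A a i * A b i) (fun x _ y _ h => he h)]
  congr 1
  ext i
  simp

lemma transpose_submatrix_id_mul_self {m n κ : Type*} [Fintype m] [DecidableEq κ]
    [DecidableEq n] {A : Matrix m n ℝ} (hA : Aᵀ * A = 1) {e : κ → n} (he : Function.Injective e) :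
    (A.submatrix id e)ᵀ * A.submatrix id e = 1 := by
  rw [transpose_submatrix, ← submatrix_mul _ _ _ _ _ Function.bijective_id, hA, submatrix_one _ he]

variable {m n : Type*} [Fintype m] [Fintype n]

lemma dotProduct_mul_mul_transpose_mulVec {R : Type*} [CommSemiring R] (A : Matrix m n R)
    (B : Matrix n n R) (x : m → R) :
    x ⬝ᵥ (A * B * Aᵀ) *ᵥ x = (Aᵀ *ᵥ x) ⬝ᵥ B *ᵥ (Aᵀ *ᵥ x) := by
  rw [← mulVec_mulVec, ← mulVec_mulVec, dotProduct_mulVec, ← mulVec_transpose]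

lemma transpose_mulVec_dotProduct_transpose_mulVec [DecidableEq m] {A : Matrix m n ℝ}
    (hA : A * Aᵀ = 1) (x : m → ℝ) : (Aᵀ *ᵥ x) ⬝ᵥ (Aᵀ *ᵥ x) = x ⬝ᵥ x := by
  rw [dotProduct_mulVec, vecMul_transpose, mulVec_mulVec, hA, one_mulVec]

lemma dotProduct_self_pos {v : n → ℝ} (hv : v ≠ 0) : 0 < v ⬝ᵥ v :=
  lt_of_le_of_ne (Finset.sum_nonneg fun i _ => mul_self_nonneg (v i))
    (Ne.symm (dotProduct_self_eq_zero.not.2 hv))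

lemma exists_mem_ne_zero_mulVec_apply_eq_zero {K : Type*} [Field K] (W : Submodule K (n → K))
    (A : Matrix m n K) (S : Finset m) (hS : S.card < finrank K W) :
    ∃ w ∈ W, w ≠ 0 ∧ ∀ j ∈ S, (A *ᵥ w) j = 0 := by
  let f : W →ₗ[K] (S → K) :=
    LinearMap.funLeft K K (fun j : S => (j : m)) ∘ₗ A.mulVecLin ∘ₗ W.subtype
  have hker : LinearMap.ker f ≠ ⊥ := LinearMap.ker_ne_bot_of_finrank_lt (by simpa using hS)
  obtain ⟨w, hw, hw0⟩ := (Submodule.ne_bot_iff _).1 hker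
  exact ⟨w, w.2, by simpa using hw0, fun j hj => congrFun (LinearMap.mem_ker.1 hw) ⟨j, hj⟩⟩

lemma dotProduct_diagonal_mulVec_le [DecidableEq n] {μ y : n → ℝ} {a : ℝ}
    (h : ∀ j, y j ≠ 0 → μ j ≤ a) : y ⬝ᵥ diagonal μ *ᵥ y ≤ a * (y ⬝ᵥ y) := by
  simp only [dotProduct, mulVec_diagonal, Finset.mul_sum]
  refine Finset.sum_le_sum fun j _ => ?_
  by_cases hj : y j = 0
  · simp [hj]
  · nlinarith [h j hj, mul_self_nonneg (y j)]

lemma le_dotProduct_diagonal_mulVec [DecidableEq n] {μ y : n → ℝ} {a : ℝ}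
    (h : ∀ j, y j ≠ 0 → a ≤ μ j) : a * (y ⬝ᵥ y) ≤ y ⬝ᵥ diagonal μ *ᵥ y := by
  simp only [dotProduct, mulVec_diagonal, Finset.mul_sum]
  refine Finset.sum_le_sum fun j _ => ?_
  by_cases hj : y j = 0
  · simp [hj]
  · nlinarith [h j hj, mul_self_nonneg (y j)]

lemma abs_dotProduct_mulVec_le [DecidableEq n] (A : Matrix n n ℝ) (x : n → ℝ) :
    |x ⬝ᵥ A *ᵥ x| ≤ ‖A‖ * (x ⬝ᵥ x) := by
  let x' := WithLp.toLp 2 x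
  have hcs := abs_real_inner_le_norm x' (toEuclideanCLM (𝕜 := ℝ) A x')
  have hop := (toEuclideanCLM (𝕜 := ℝ) A).le_opNorm x'
  rw [inner_toEuclideanCLM] at hcs
  rw [l2_opNorm_toEuclideanCLM] at hop
  have hx' : ‖x'‖ * ‖x'‖ = x ⬝ᵥ x := by
    rw [← real_inner_self_eq_norm_mul_norm, EuclideanSpace.inner_toLp_toLp]
    simp [dotProduct]
  calc |x ⬝ᵥ A *ᵥ x| ≤ ‖x'‖ * (‖A‖ * ‖x'‖) :=
        hcs.trans (mul_le_mul_of_nonneg_left hop (norm_nonneg _))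
    _ = ‖A‖ * (x ⬝ᵥ x) := by rw [← hx']; ring

lemma abs_dotProduct_mulVec_sub_le [DecidableEq n] (A B : Matrix n n ℝ) (x : n → ℝ) :
    |x ⬝ᵥ A *ᵥ x - x ⬝ᵥ B *ᵥ x| ≤ ‖A - B‖ * (x ⬝ᵥ x) := by
  rw [← dotProduct_sub, ← sub_mulVec]
  exact abs_dotProduct_mulVec_le (A - B) x

lemma l2_opNorm_transpose [DecidableEq m] [DecidableEq n] (A : Matrix m n ℝ) : ‖Aᵀ‖ = ‖A‖ := by
  rw [← conjTranspose_eq_transpose_of_trivial, l2_opNorm_conjTranspose]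

lemma l2_opNorm_le_one_of_transpose_mul_self_eq_one [DecidableEq n] {A : Matrix m n ℝ}
    (hA : Aᵀ * A = 1) : ‖A‖ ≤ 1 := by
  have h := l2_opNorm_conjTranspose_mul_self A
  rw [conjTranspose_eq_transpose_of_trivial, hA] at h
  have h1 : ‖(1 : Matrix n n ℝ)‖ ≤ 1 := by
    rw [← diagonal_one, l2_opNorm_diagonal]
    exact (pi_norm_le_iff_of_nonneg zero_le_one).2 fun _ => by simp
  nlinarith [norm_nonneg A]

lemma mul_diagonal_mul_transpose_mul [DecidableEq n] {U : Matrix m n ℝ} (hU : Uᵀ * U = 1)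
    (a b : n → ℝ) :
    U * diagonal a * Uᵀ * (U * diagonal b * Uᵀ) = U * diagonal (a * b) * Uᵀ := by
  calc U * diagonal a * Uᵀ * (U * diagonal b * Uᵀ)
      = U * (diagonal a * (Uᵀ * U) * diagonal b) * Uᵀ := by simp only [Matrix.mul_assoc]
    _ = U * diagonal (a * b) * Uᵀ := by
      rw [hU, Matrix.mul_one, diagonal_mul_diagonal]; rfl

lemma isStarProjection_mul_transpose [DecidableEq n] {U : Matrix m n ℝ} (hU : Uᵀ * U = 1) :
    IsStarProjection (U * Uᵀ) where
  isIdempotentElem := by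
    rw [IsIdempotentElem, Matrix.mul_assoc, ← Matrix.mul_assoc Uᵀ, hU, Matrix.one_mul]
  isSelfAdjoint := by
    rw [IsSelfAdjoint, star_eq_conjTranspose, conjTranspose_eq_transpose_of_trivial,
      transpose_mul, transpose_transpose]

variable [DecidableEq m] [DecidableEq n] {U : Matrix m n ℝ}

lemma l2_opNorm_mul_diagonal_mul_transpose_le (hU : Uᵀ * U = 1) (f : n → ℝ) :
    ‖U * diagonal f * Uᵀ‖ ≤ ‖f‖ := by
  have hU1 := l2_opNorm_le_one_of_transpose_mul_self_eq_one hU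
  calc ‖U * diagonal f * Uᵀ‖ ≤ ‖U * diagonal f‖ * ‖Uᵀ‖ := l2_opNorm_mul _ _
    _ ≤ ‖U‖ * ‖diagonal f‖ * ‖Uᵀ‖ := by gcongr; exact l2_opNorm_mul _ _
    _ ≤ 1 * ‖f‖ * 1 := by rw [l2_opNorm_diagonal, l2_opNorm_transpose]; gcongr
    _ = ‖f‖ := by ring

lemma mul_diagonal_mul_transpose_mul_one_sub (hU : Uᵀ * U = 1) (Λ : n → ℝ) :
    U * diagonal Λ * Uᵀ * (1 - U * Uᵀ) = 0 := by
  have hP : U * Uᵀ = U * diagonal (1 : n → ℝ) * Uᵀ := by rw [diagonal_one', Matrix.mul_one]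
  rw [Matrix.mul_sub, Matrix.mul_one, hP, mul_diagonal_mul_transpose_mul hU, mul_one, sub_self]

lemma exists_mul_eq_mul_transpose (hU : Uᵀ * U = 1) {Λ : n → ℝ} {lam : ℝ} (hlam : 0 < lam)
    (hΛ : ∀ c, lam ≤ Λ c) : ∃ ρ, U * diagonal Λ * Uᵀ * ρ = U * Uᵀ ∧ ‖ρ‖ ≤ lam⁻¹ := by
  refine ⟨U * diagonal Λ⁻¹ * Uᵀ, ?_, ?_⟩
  · have hΛΛ : Λ * Λ⁻¹ = 1 := funext fun c => mul_inv_cancel₀ (hlam.trans_le (hΛ c)).ne'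
    rw [mul_diagonal_mul_transpose_mul hU, hΛΛ, diagonal_one', Matrix.mul_one]
  · simpa using (l2_opNorm_mul_diagonal_mul_transpose_le hU _).trans
      (norm_indicator_inv_le (s := Set.univ) hlam fun c _ => hΛ c)

lemma exists_mul_eq_mul_diagonal_indicator (hU : Uᵀ * U = 1) {μ : n → ℝ} {s : Set n} {lam : ℝ}
    (hlam : 0 < lam) (hs : ∀ i ∈ s, lam ≤ μ i) :
    ∃ g, g * (U * diagonal μ * Uᵀ) = U * diagonal (s.indicator (1 : n → ℝ)) * Uᵀ ∧
      ‖g‖ ≤ lam⁻¹ := by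
  refine ⟨U * diagonal (s.indicator μ⁻¹) * Uᵀ, ?_,
    (l2_opNorm_mul_diagonal_mul_transpose_le hU _).trans (norm_indicator_inv_le hlam hs)⟩
  rw [mul_diagonal_mul_transpose_mul hU]
  congr 3
  funext i
  by_cases hi : i ∈ s
  · simp [hi, inv_mul_cancel₀ (hlam.trans_le (hs i hi)).ne']
  · simp [hi]

lemma l2_opNorm_one_sub_mul_diagonal_indicator_le (hU : Uᵀ * U = 1) {μ : n → ℝ} {s : Set n}
    {ε : ℝ} (hε : 0 ≤ ε) (hs : ∀ i ∉ s, |μ i| ≤ ε) :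
    ‖(1 - U * diagonal (s.indicator (1 : n → ℝ)) * Uᵀ) * (U * diagonal μ * Uᵀ)‖ ≤ ε := by
  rw [Matrix.sub_mul, Matrix.one_mul, mul_diagonal_mul_transpose_mul hU, ← Matrix.sub_mul,
    ← Matrix.mul_sub, diagonal_sub]
  refine (l2_opNorm_mul_diagonal_mul_transpose_le hU _).trans
    ((pi_norm_le_iff_of_nonneg hε).2 fun i => ?_)
  by_cases hi : i ∈ s
  · simp [hi, hε]
  · simpa [hi] using hs i hi

end Matrix

namespace CourantFischer

variable {d : ℕ} {V : Matrix (Fin d) (Fin d) ℝ} (hV : V * Vᵀ = 1) {μ : Fin d → ℝ}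
  (hμ : Antitone μ) {W : Submodule ℝ (Fin d → ℝ)} {i : Fin d} {c : ℝ}
include hV hμ

lemma le_eigenvalue_of_forall_mem (hW : (i : ℕ) < finrank ℝ W)
    (h : ∀ x ∈ W, c * (x ⬝ᵥ x) ≤ x ⬝ᵥ (V * diagonal μ * Vᵀ) *ᵥ x) : c ≤ μ i := by
  obtain ⟨w, hwW, hw0, hwi⟩ := exists_mem_ne_zero_mulVec_apply_eq_zero W Vᵀ (Finset.Iio i)
    (by rwa [Fin.card_Iio])
  have hquad := dotProduct_diagonal_mulVec_le (μ := μ) (a := μ i) (y := Vᵀ *ᵥ w) fun j hj =>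
    hμ (not_lt.1 fun hji => hj (hwi j (Finset.mem_Iio.2 hji)))
  have hw := h w hwW
  rw [dotProduct_mul_mul_transpose_mulVec] at hw
  rw [transpose_mulVec_dotProduct_transpose_mulVec hV] at hquad
  exact le_of_mul_le_mul_right (hw.trans hquad) (dotProduct_self_pos hw0)

lemma eigenvalue_le_of_forall_mem (hW : d ≤ finrank ℝ W + i)
    (h : ∀ x ∈ W, x ⬝ᵥ (V * diagonal μ * Vᵀ) *ᵥ x ≤ c * (x ⬝ᵥ x)) : μ i ≤ c := by
  obtain ⟨w, hwW, hw0, hwi⟩ := exists_mem_ne_zero_mulVec_apply_eq_zero W Vᵀ (Finset.Ioi i)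
    (by rw [Fin.card_Ioi]; omega)
  have hquad := le_dotProduct_diagonal_mulVec (μ := μ) (a := μ i) (y := Vᵀ *ᵥ w) fun j hj =>
    hμ (not_lt.1 fun hij => hj (hwi j (Finset.mem_Ioi.2 hij)))
  have hw := h w hwW
  rw [dotProduct_mul_mul_transpose_mulVec] at hw
  rw [transpose_mulVec_dotProduct_transpose_mulVec hV] at hquad
  exact le_of_mul_le_mul_right (hquad.trans hw) (dotProduct_self_pos hw0)

end CourantFischer

namespace Weyl

variable {d r : ℕ} {U : Matrix (Fin d) (Fin r) ℝ} {Λ : Fin r → ℝ}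
  {V : Matrix (Fin d) (Fin d) ℝ} (hV : V * Vᵀ = 1) {μ : Fin d → ℝ} (hμ : Antitone μ)
include hV hμ

lemma neg_norm_sub_le_eigenvalue (hΛ : ∀ c, 0 ≤ Λ c) (i : Fin d) :
    -‖V * diagonal μ * Vᵀ - U * diagonal Λ * Uᵀ‖ ≤ μ i := by
  refine CourantFischer.le_eigenvalue_of_forall_mem hV hμ (W := ⊤) (by simp) fun x _ => ?_
  have hN : 0 ≤ x ⬝ᵥ (U * diagonal Λ * Uᵀ) *ᵥ x := by
    rw [dotProduct_mul_mul_transpose_mulVec]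
    simpa using le_dotProduct_diagonal_mulVec (a := 0) (y := Uᵀ *ᵥ x) fun c _ => hΛ c
  have hE := abs_dotProduct_mulVec_sub_le (V * diagonal μ * Vᵀ) (U * diagonal Λ * Uᵀ) x
  linarith [(abs_le.1 hE).1]

lemma sub_norm_sub_le_eigenvalue (hU : Uᵀ * U = 1) {lam : ℝ} (hΛ : ∀ c, lam ≤ Λ c) {i : Fin d}
    (hi : (i : ℕ) < r) : lam - ‖V * diagonal μ * Vᵀ - U * diagonal Λ * Uᵀ‖ ≤ μ i := by
  have hinj : Function.Injective U.mulVecLin := fun y z hyz => by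
    simpa [mulVec_mulVec, hU] using congrArg (Uᵀ *ᵥ ·) hyz
  refine CourantFischer.le_eigenvalue_of_forall_mem hV hμ (W := LinearMap.range U.mulVecLin)
    (by rwa [LinearMap.finrank_range_of_inj hinj, finrank_fin_fun]) ?_
  rintro _ ⟨y, rfl⟩
  have hy : (U *ᵥ y) ⬝ᵥ (U *ᵥ y) = y ⬝ᵥ y := by
    simpa using transpose_mulVec_dotProduct_transpose_mulVec (A := Uᵀ) (by simpa using hU) y
  have hN : lam * (y ⬝ᵥ y) ≤ (U *ᵥ y) ⬝ᵥ (U * diagonal Λ * Uᵀ) *ᵥ (U *ᵥ y) := by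
    rw [dotProduct_mul_mul_transpose_mulVec, mulVec_mulVec, hU, one_mulVec]
    exact le_dotProduct_diagonal_mulVec fun c _ => hΛ c
  have hE := abs_dotProduct_mulVec_sub_le (V * diagonal μ * Vᵀ) (U * diagonal Λ * Uᵀ) (U *ᵥ y)
  simp only [mulVecLin_apply]
  rw [hy] at hE ⊢
  linarith [(abs_le.1 hE).1]

lemma eigenvalue_le_norm_sub {i : Fin d} (hi : r ≤ (i : ℕ)) :
    μ i ≤ ‖V * diagonal μ * Vᵀ - U * diagonal Λ * Uᵀ‖ := by
  have hker := LinearMap.finrank_range_add_finrank_ker Uᵀ.mulVecLin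
  have hrange := (LinearMap.range Uᵀ.mulVecLin).finrank_le
  rw [finrank_fin_fun] at hker hrange
  refine CourantFischer.eigenvalue_le_of_forall_mem hV hμ (W := LinearMap.ker Uᵀ.mulVecLin)
    (by omega) fun x hx => ?_
  have hN : x ⬝ᵥ (U * diagonal Λ * Uᵀ) *ᵥ x = 0 := by
    have hUx : Uᵀ *ᵥ x = 0 := LinearMap.mem_ker.1 hx
    rw [dotProduct_mul_mul_transpose_mulVec, hUx]
    simp
  have hE := abs_dotProduct_mulVec_sub_le (V * diagonal μ * Vᵀ) (U * diagonal Λ * Uᵀ) x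
  linarith [(abs_le.1 hE).2]

end Weyl

lemma norm_sub_le_of_mul_eq {A : Type*} [NormedRing A] {p q n ñ g ρ : A} {a b ε : ℝ}
    (hq : q = g * ñ) (hp : p = n * ρ) (hnp : n * (1 - p) = 0)
    (h1p : ‖1 - p‖ ≤ 1) (h1q : ‖1 - q‖ ≤ 1) (hqñ : ‖(1 - q) * ñ‖ ≤ ε) (hñn : ‖ñ - n‖ ≤ ε)
    (hg : ‖g‖ ≤ a) (hρ : ‖ρ‖ ≤ b) :
    ‖q - p‖ ≤ (a + 2 * b) * ε := by
  have hε : 0 ≤ ε := (norm_nonneg _).trans hñn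
  have hq' : g * ((ñ - n) * (1 - p)) = q * (1 - p) := by
    rw [sub_mul, hnp, sub_zero, ← mul_assoc, hq]
  have hp' : ((1 - q) * ñ - (1 - q) * (ñ - n)) * ρ = (1 - q) * p := by
    rw [← mul_sub, sub_sub_cancel, mul_assoc, hp]
  calc ‖q - p‖ = ‖g * ((ñ - n) * (1 - p)) - ((1 - q) * ñ - (1 - q) * (ñ - n)) * ρ‖ := by
        rw [hq', hp']; noncomm_ring
    _ ≤ ‖g‖ * (‖ñ - n‖ * ‖1 - p‖) + (‖(1 - q) * ñ‖ + ‖1 - q‖ * ‖ñ - n‖) * ‖ρ‖ := by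
        refine (norm_sub_le _ _).trans (add_le_add ?_ ?_)
        · exact (norm_mul_le _ _).trans (by gcongr; exact norm_mul_le _ _)
        · refine (norm_mul_le _ _).trans (mul_le_mul_of_nonneg_right ?_ (norm_nonneg _))
          exact (norm_sub_le _ _).trans (add_le_add_right (norm_mul_le _ _) _)
    _ ≤ a * (ε * 1) + (ε + 1 * ε) * b := by gcongr; exact (norm_nonneg _).trans hg
    _ = (a + 2 * b) * ε := by ring

/-- Spectral projection perturbation: let `QQᵀ = U Λ Uᵀ` with `U` orthonormal
and `Λ` diagonal with entries `≥ λ_r² > 0`, and let `Ñ = V diag(μ) Vᵀ` be a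
spectral decomposition (`μ` antitone) with `Ũ` the matrix of the top `r`
eigenvectors (first `r` columns of `V`).  If `‖Ñ − QQᵀ‖_sp < λ_r²/2` then
`‖ŨŨᵀ − UUᵀ‖_sp ≤ (4/λ_r²)‖Ñ − QQᵀ‖_sp`. -/
theorem spectral_projection_perturbation {d r : ℕ} (hr : r ≤ d)
    (Q U : Matrix (Fin d) (Fin r) ℝ)
    (Λ : Fin r → ℝ) (lamr2 : ℝ) (hlam : 0 < lamr2)
    (hΛ : ∀ i, lamr2 ≤ Λ i)
    (hU : U.transpose * U = 1)
    (hQ : Q * Q.transpose = U * Matrix.diagonal Λ * U.transpose)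
    (Ntilde : Matrix (Fin d) (Fin d) ℝ)
    (V : Matrix.orthogonalGroup (Fin d) ℝ) (μ : Fin d → ℝ)
    (hμ : ∀ i j : Fin d, i ≤ j → μ j ≤ μ i)
    (hNtilde : Ntilde = (V : Matrix (Fin d) (Fin d) ℝ) * Matrix.diagonal μ *
      (V : Matrix (Fin d) (Fin d) ℝ).transpose)
    (Utilde : Matrix (Fin d) (Fin r) ℝ)
    (hUtilde : Utilde = (V : Matrix (Fin d) (Fin d) ℝ).submatrix id (Fin.castLE hr))
    (hgap : spNorm (Ntilde - Q * Q.transpose) < lamr2 / 2) :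
    spNorm (Utilde * Utilde.transpose - U * U.transpose) ≤
      (4 / lamr2) * spNorm (Ntilde - Q * Q.transpose) := by
  set W : Matrix (Fin d) (Fin d) ℝ := ↑V
  have hW : W * Wᵀ = 1 := (mem_orthogonalGroup_iff _ _).1 V.2
  have hWt : Wᵀ * W = 1 := (mem_orthogonalGroup_iff' _ _).1 V.2
  set ε := spNorm (Ntilde - Q * Qᵀ)
  have hε : ‖W * diagonal μ * Wᵀ - U * diagonal Λ * Uᵀ‖ = ε := by rw [← hNtilde, ← hQ]; rfl
  set s : Set (Fin d) := {i | (i : ℕ) < r}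
  have htop (i) (hi : i ∈ s) : lamr2 / 2 ≤ μ i := by
    linarith [Weyl.sub_norm_sub_le_eigenvalue hW hμ hU hΛ hi]
  have hrest (i) (hi : i ∉ s) : |μ i| ≤ ε := abs_le.2
    ⟨hε ▸ Weyl.neg_norm_sub_le_eigenvalue hW hμ (fun c => hlam.le.trans (hΛ c)) i,
      hε ▸ Weyl.eigenvalue_le_norm_sub hW hμ (not_lt.1 hi)⟩
  have hPt : Utilde * Utildeᵀ = W * diagonal (s.indicator 1) * Wᵀ := by
    rw [hUtilde, submatrix_id_mul_transpose _ (Fin.castLE_injective hr), Fin.range_castLE]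
  have hUt : Utildeᵀ * Utilde = 1 :=
    hUtilde ▸ transpose_submatrix_id_mul_self hWt (Fin.castLE_injective hr)
  obtain ⟨g, hg, hgnorm⟩ := exists_mul_eq_mul_diagonal_indicator hWt (half_pos hlam) htop
  obtain ⟨ρ, hρ, hρnorm⟩ := exists_mul_eq_mul_transpose hU hlam hΛ
  have hcompl : ‖(1 - Utilde * Utildeᵀ) * Ntilde‖ ≤ ε := by
    rw [hPt, hNtilde]
    exact l2_opNorm_one_sub_mul_diagonal_indicator_le hWt (norm_nonneg _) hrest
  calc spNorm (Utilde * Utildeᵀ - U * Uᵀ) ≤ ((lamr2 / 2)⁻¹ + 2 * lamr2⁻¹) * ε :=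
        norm_sub_le_of_mul_eq (by rw [hPt, hNtilde, hg]) (by rw [hQ, hρ])
          (by rw [hQ, mul_diagonal_mul_transpose_mul_one_sub hU])
          (isStarProjection_mul_transpose hU).one_sub.norm_le
          (isStarProjection_mul_transpose hUt).one_sub.norm_le
          hcompl le_rfl hgnorm hρnorm
    _ = 4 / lamr2 * ε := by field_simp; ring
end

section
/- For any sequence of positive reals W^{(0)}, W^{(1)}, … satisfying the recursion W^{(k)} ≤ (3/2)T + a·W^{(k−1)} + b·(W^{(k−1)})², where T, a, b > 0 with a ≤ 1/8, 6bT ≤ 1/8, and the initial condition W^{(0)} ≤ 6T + c₀ with b·c₀ ≤ 1/16 and c₀ ≤ 1: if additionally 9a + 36bT + 6bc₀ ≤ 9/2, then W^{(k)} ≤ 6T + c₀·2^{−k} for all k ≥ 0. -/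
/-- Outer-iteration error recursion: if `W_k ≤ (3/2)T + a W_{k−1} + b W_{k−1}²`
with `T, a, b > 0`, `a ≤ 1/8`, `6bT ≤ 1/8`, `W_0 ≤ 6T + c₀`, `b c₀ ≤ 1/16`,
`c₀ ≤ 1`, and `9a + 36bT + 6bc₀ ≤ 9/2`, then `W_k ≤ 6T + c₀ 2^{−k}` for all `k`. -/
theorem outer_iteration_recursion (W : ℕ → ℝ) (T a b c₀ : ℝ)
    (hWpos : ∀ k, 0 < W k)
    (hT : 0 < T) (ha : 0 < a) (hb : 0 < b)
    (ha8 : a ≤ 1/8) (hbT : 6 * b * T ≤ 1/8)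
    (hc₀ : 0 < c₀) (hbc₀ : b * c₀ ≤ 1/16) (hc₀1 : c₀ ≤ 1)
    (hmix : 9 * a + 36 * b * T + 6 * b * c₀ ≤ 9/2)
    (hW0 : W 0 ≤ 6 * T + c₀)
    (hrec : ∀ k : ℕ, W (k + 1) ≤ (3/2) * T + a * W k + b * (W k) ^ 2) :
    ∀ k : ℕ, W k ≤ 6 * T + c₀ / 2 ^ k := by
  intro k
  induction k with
  | zero => simpa using hW0
  | succ k ih =>
    have h2k : (0:ℝ) < 2 ^ k := by positivity
    have h1 : (1:ℝ) ≤ 2 ^ k := one_le_pow₀ (by norm_num)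
    have hdpos : 0 < c₀ / 2 ^ k := by positivity
    have hd : c₀ / 2 ^ k ≤ c₀ := by
      rw [div_le_iff₀ h2k]; nlinarith
    have hsq : (W k) ^ 2 ≤ (6 * T + c₀ / 2 ^ k) ^ 2 := by
      nlinarith [hWpos k]
    have hpow : (2:ℝ) ^ (k + 1) = 2 * 2 ^ k := by ring
    have hgoal : c₀ / 2 ^ (k + 1) = (c₀ / 2 ^ k) / 2 := by
      rw [hpow]; ring
    have h := hrec k
    rw [hgoal]
    nlinarith [mul_le_mul_of_nonneg_left ih (le_of_lt ha),
      mul_le_mul_of_nonneg_left hsq (le_of_lt hb),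
      mul_pos hb hdpos, mul_pos hb hT, mul_le_mul_of_nonneg_left hd (le_of_lt hb),
      mul_le_mul_of_nonneg_right hbT hdpos.le,
      mul_le_mul_of_nonneg_right hbc₀ hdpos.le,
      mul_le_mul_of_nonneg_right hbT hT.le]
end
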